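/- arXiv:0705.4218 — 5 statements merged into one kernel-verified Lean document; each statement's English description precedes it below -/
import Mathlib

section
/- Let g ∈ ℝ with g ≠ 0 and m ∈ ℕ. A homogeneous polynomial p ∈ ℂ[z₁,z₂] of total degree m satisfies Q(g)p = m·p if and only if p is a scalar multiple of z₂^m. Hence the eigenvalue m of Q(g) restricted to homogeneous polynomials of degree m has geometric multiplicity 1. -/
/-!
By Euler's identity `z₁∂₁p + z₂∂₂p = m p` for `p` homogeneous of degree `m`, so `Q(g)p = m p`
exactly when `i g z₂ ∂p/∂z₁ = 0`, i.e. (as `g ≠ 0`) when `p` does not involve `z₁`; a homogeneous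
polynomial of degree `m` in `z₂` alone is a multiple of `z₂^m`.
-/

open MvPolynomial

/-- The Bargmann-space representation of `H(g) − 1`:
`Q(g)p = z₁·∂p/∂z₁ + z₂·∂p/∂z₂ + i g·z₂·∂p/∂z₁` on `ℂ[z₁,z₂]`
(`X 0` plays the role of `z₁` and `X 1` that of `z₂`). -/
noncomputable def Qop (g : ℝ) (p : MvPolynomial (Fin 2) ℂ) : MvPolynomial (Fin 2) ℂ :=
  X 0 * pderiv 0 p + X 1 * pderiv 1 p + (Complex.I * (g : ℂ)) • (X 1 * pderiv 0 p)

namespace MvPolynomial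

variable {R σ : Type*} [CommSemiring R]

theorem coeff_eq_zero_of_pderiv_eq_zero [NoZeroDivisors R] [CharZero R] {i : σ}
    {p : MvPolynomial σ R} (h : pderiv i p = 0) {d : σ →₀ ℕ} (hd : d i ≠ 0) : coeff d p = 0 := by
  have hcoeff := coeff_pderiv (i := i) p (d - Finsupp.single i 1)
  rw [h, coeff_zero, Finsupp.sub_add_single_one_cancel hd, eq_comm] at hcoeff
  exact (mul_eq_zero.mp hcoeff).resolve_right (Nat.cast_add_one_ne_zero _)

theorem IsHomogeneous.eq_smul_X_one_pow {p : MvPolynomial (Fin 2) R} {m : ℕ}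
    (hp : p.IsHomogeneous m) (h : ∀ d : Fin 2 →₀ ℕ, d 0 ≠ 0 → coeff d p = 0) :
    p = coeff (Finsupp.single 1 m) p • X 1 ^ m := by
  ext d
  rw [coeff_smul, X_pow_eq_monomial, coeff_monomial]
  split_ifs with hd
  · rw [← hd, smul_eq_mul, mul_one]
  · rw [smul_zero]
    by_contra hne
    have hd0 : d 0 = 0 := not_imp_comm.mp (h d) hne
    have hd1 : d 1 = m := by
      have := hp.coeff_eq_zero (d := d)
      rw [Finsupp.degree_eq_sum, Fin.sum_univ_two, hd0, zero_add] at this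
      exact not_imp_comm.mp this hne
    exact hd (Finsupp.ext fun j => by fin_cases j <;> simp [hd0, hd1])

theorem IsHomogeneous.pderiv_zero_eq_zero_iff [NoZeroDivisors R] [CharZero R]
    {p : MvPolynomial (Fin 2) R} {m : ℕ} (hp : p.IsHomogeneous m) :
    pderiv 0 p = 0 ↔ ∃ c : R, p = c • X 1 ^ m := by
  constructor
  · exact fun h => ⟨_, hp.eq_smul_X_one_pow fun _ => coeff_eq_zero_of_pderiv_eq_zero h⟩
  · rintro ⟨c, rfl⟩
    simp

end MvPolynomial

theorem Qop_eq_of_isHomogeneous (g : ℝ) {m : ℕ} {p : MvPolynomial (Fin 2) ℂ}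
    (hp : p.IsHomogeneous m) :
    Qop g p = (m : ℂ) • p + (Complex.I * (g : ℂ)) • (X 1 * pderiv 0 p) := by
  rw [Qop, Nat.cast_smul_eq_nsmul, ← hp.sum_X_mul_pderiv, Fin.sum_univ_two]

/-- for `g ≠ 0`, a homogeneous polynomial `p` of degree `m` satisfies
`Q(g)p = m·p` iff `p` is a scalar multiple of `z₂^m`; hence the eigenvalue `m` of
`Q(g)` on homogeneous polynomials of degree `m` has geometric multiplicity 1. -/
theorem Qop_eigenvector_iff (g : ℝ) (hg : g ≠ 0) (m : ℕ) (p : MvPolynomial (Fin 2) ℂ)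
    (hp : p.IsHomogeneous m) :
    Qop g p = (m : ℂ) • p ↔ ∃ c : ℂ, p = c • (X 1 : MvPolynomial (Fin 2) ℂ) ^ m := by
  rw [Qop_eq_of_isHomogeneous g hp, add_eq_left, ← hp.pderiv_zero_eq_zero_iff]
  simp [hg, X_ne_zero]
end

section
/- Let g ∈ ℝ. If p ∈ ℂ[z₁,z₂] is a nonzero polynomial and λ ∈ ℂ satisfies Q(g)p = λ·p, then λ is a nonnegative integer (indeed λ = m for some m ≤ deg p). In particular, every eigenvalue of Q(g) on polynomials is real, so the point spectrum of the non-selfadjoint PT-symmetric operator Q(g) on polynomials is {0, 1, 2, …}. -/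
/-!
`Q(g)` is the Euler operator `z₁∂₁ + z₂∂₂`, which multiplies the monomial `z^ν` by `ν₁ + ν₂`,
plus `i g z₂∂₁`, which strictly raises the `z₁`-exponent. At a monomial `z^ν` of `p` whose
`z₁`-exponent is maximal the second part contributes nothing, so comparing the coefficients of
`z^ν` in `Q(g)p = λp` gives `λ = ν₁ + ν₂ ≤ deg p`.
-/

open MvPolynomial

namespace MvPolynomial

variable {σ R : Type*} [CommSemiring R]

theorem coeff_X_mul_pderiv_self (i : σ) (p : MvPolynomial σ R) (m : σ →₀ ℕ) :
    coeff m (X i * pderiv i p) = m i * coeff m p := by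
  classical
  rw [coeff_X_mul']
  split_ifs with hi
  · have hle : Finsupp.single i 1 ≤ m := by
      rw [Finsupp.single_le_iff]; exact Nat.one_le_iff_ne_zero.mpr (Finsupp.mem_support_iff.mp hi)
    rw [coeff_pderiv, tsub_add_cancel_of_le hle, Finsupp.tsub_apply, Finsupp.single_eq_same,
      mul_comm]
    norm_cast
    rw [Nat.sub_add_cancel (by simpa using hle)]
  · rw [Finsupp.notMem_support_iff.mp hi, Nat.cast_zero, zero_mul]

theorem coeff_X_mul_pderiv_of_degreeOf_le {i j : σ} (hij : i ≠ j) (p : MvPolynomial σ R)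
    {m : σ →₀ ℕ} (hm : degreeOf i p ≤ m i) : coeff m (X j * pderiv i p) = 0 := by
  classical
  rw [coeff_X_mul']
  split_ifs
  · rw [coeff_pderiv, notMem_support_iff.mp, zero_mul]
    intro hmem
    have := monomial_le_degreeOf i hmem
    simp [hij] at this
    omega
  · rfl

end MvPolynomial

theorem coeff_Qop_of_degreeOf_le (g : ℝ) (p : MvPolynomial (Fin 2) ℂ) {m : Fin 2 →₀ ℕ}
    (hm : degreeOf 0 p ≤ m 0) : coeff m (Qop g p) = (m 0 + m 1) * coeff m p := by
  rw [Qop, coeff_add, coeff_add, coeff_smul, coeff_X_mul_pderiv_self, coeff_X_mul_pderiv_self,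
    coeff_X_mul_pderiv_of_degreeOf_le (by decide) p hm, smul_zero, add_zero, add_mul]

theorem exists_mem_support_apply_eq_degreeOf {σ R : Type*} [CommSemiring R] (i : σ)
    {p : MvPolynomial σ R} (hp : p ≠ 0) : ∃ m ∈ p.support, m i = degreeOf i p := by
  obtain ⟨m, hm, hmax⟩ := Finset.exists_mem_eq_sup _ (support_nonempty.mpr hp) (fun m => m i)
  exact ⟨m, hm, by rw [degreeOf_eq_sup, hmax]⟩

/-- every eigenvalue of `Q(g)` on polynomials is a nonnegative integer:
if `p ≠ 0` and `Q(g)p = λ·p` then `λ = m` for some natural number `m ≤ deg p`. -/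
theorem Qop_eigenvalue_natCast (g : ℝ) (p : MvPolynomial (Fin 2) ℂ) (hp : p ≠ 0)
    (lam : ℂ) (hlam : Qop g p = lam • p) :
    ∃ m : ℕ, lam = (m : ℂ) ∧ m ≤ p.totalDegree := by
  obtain ⟨ν, hν, hν0⟩ := exists_mem_support_apply_eq_degreeOf 0 hp
  have hcoeff : ((ν 0 + ν 1 : ℕ) : ℂ) * coeff ν p = lam * coeff ν p := by
    rw [Nat.cast_add, ← coeff_Qop_of_degreeOf_le g p hν0.ge, hlam, coeff_smul, smul_eq_mul]
  refine ⟨ν 0 + ν 1, (mul_right_cancel₀ (mem_support_iff.mp hν) hcoeff).symm, ?_⟩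
  simpa [Finsupp.sum_fintype, Fin.sum_univ_two] using le_totalDegree hν
end

section
/- For every m ≥ 1 and every g ∈ ℝ with g ≠ 0, the matrix T_m(g) is not diagonalizable: there exist no invertible matrix S ∈ GL_{m+1}(ℂ) and diagonal matrix Δ with T_m(g) = S·Δ·S⁻¹. -/
/-!
`T_m(g)` is the scalar `m + 1` plus the nilpotent `i g D_m`. A diagonalizable matrix that differs
from a scalar by a nilpotent is that scalar, because a diagonal nilpotent matrix over a reduced ring
vanishes; but `i g D_m ≠ 0` as soon as `g ≠ 0` and `m ≥ 1`.
-/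

/-- The `(m+1)×(m+1)` nilpotent matrix `D_m` with superdiagonal entries
`(D_m)_{h,h+1} = √((h+1)(m−h))`, `h = 0,…,m−1`. -/
noncomputable def Dmat (m : ℕ) : Matrix (Fin (m + 1)) (Fin (m + 1)) ℂ :=
  Matrix.of fun h k =>
    if (k : ℕ) = (h : ℕ) + 1 then ((Real.sqrt (((h : ℕ) + 1) * (m - (h : ℕ))) : ℝ) : ℂ) else 0

/-- The matrix `T_m(g) = (m+1)·I + i g·D_m` of `H(g)` restricted to the invariant
subspace `ℋ_m`. -/
noncomputable def Tmat (m : ℕ) (g : ℝ) : Matrix (Fin (m + 1)) (Fin (m + 1)) ℂ :=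
  ((m : ℂ) + 1) • (1 : Matrix (Fin (m + 1)) (Fin (m + 1)) ℂ) + (Complex.I * (g : ℂ)) • Dmat m

namespace Matrix

variable {n R : Type*} [Fintype n] [DecidableEq n] [CommRing R]

theorem IsUpperTriangular.isNilpotent_of_diag_eq_zero [LinearOrder n] {M : Matrix n n R}
    (hM : M.IsUpperTriangular) (hdiag : ∀ i, M i i = 0) : IsNilpotent M :=
  ⟨Fintype.card n, by
    simpa [charpoly_of_isUpperTriangular M hM, hdiag] using aeval_self_charpoly M⟩

theorem IsDiag.eq_zero_of_isNilpotent [IsReduced R] {D : Matrix n n R} (hD : D.IsDiag)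
    (hN : IsNilpotent D) : D = 0 := by
  obtain ⟨k, hk⟩ := hN
  rw [← hD.diagonal_diag, diagonal_pow, diagonal_eq_zero] at hk
  rw [← hD.diagonal_diag, diagonal_eq_zero]
  exact IsReduced.eq_zero _ ⟨k, hk⟩

theorem isNilpotent_of_isNilpotent_conj {S A : Matrix n n R} (hS : IsUnit S)
    (h : IsNilpotent (S * A * S⁻¹)) : IsNilpotent A := by
  lift S to (Matrix n n R)ˣ using hS
  obtain ⟨k, hk⟩ := h
  exact ⟨k, by simpa [← coe_units_inv, Units.conj_pow] using hk⟩

theorem conj_eq_smul_one_of_isNilpotent_sub [IsReduced R] {S Δ : Matrix n n R} (a : R)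
    (hS : IsUnit S) (hΔ : Δ.IsDiag) (h : IsNilpotent (S * Δ * S⁻¹ - a • 1)) :
    S * Δ * S⁻¹ = a • 1 := by
  have hSS : S * S⁻¹ = 1 := mul_nonsing_inv S ((isUnit_iff_isUnit_det S).mp hS)
  have hconj : S * Δ * S⁻¹ - a • 1 = S * (Δ - a • 1) * S⁻¹ := by
    rw [Matrix.mul_sub, Matrix.sub_mul, Matrix.mul_smul, Matrix.mul_one, Matrix.smul_mul, hSS]
  have hΔa : Δ - a • 1 = 0 :=
    (hΔ.sub (isDiag_smul_one n a)).eq_zero_of_isNilpotent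
      (isNilpotent_of_isNilpotent_conj hS (hconj ▸ h))
  rw [sub_eq_zero.mp hΔa, Matrix.mul_smul, Matrix.mul_one, Matrix.smul_mul, hSS]

end Matrix

theorem Dmat_isUpperTriangular (m : ℕ) : (Dmat m).IsUpperTriangular := by
  intro h k hkh
  simp only [Dmat, Matrix.of_apply]
  rw [if_neg]
  have : (k : ℕ) < h := hkh
  omega

theorem Dmat_isNilpotent (m : ℕ) : IsNilpotent (Dmat m) :=
  (Dmat_isUpperTriangular m).isNilpotent_of_diag_eq_zero fun _ => by simp [Dmat]

theorem Dmat_ne_zero {m : ℕ} (hm : 1 ≤ m) : Dmat m ≠ 0 := by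
  intro hD
  have hentry := congrFun (congrFun hD ⟨0, by omega⟩) ⟨1, by omega⟩
  simp [Dmat] at hentry
  omega

/-- for `m ≥ 1` and `g ≠ 0`, the matrix `T_m(g)` is not diagonalizable:
there are no invertible `S` and diagonal `Δ` with `T_m(g) = S·Δ·S⁻¹`. -/
theorem Tmat_not_diagonalizable (m : ℕ) (hm : 1 ≤ m) (g : ℝ) (hg : g ≠ 0) :
    ¬ ∃ (S Δ : Matrix (Fin (m + 1)) (Fin (m + 1)) ℂ),
        IsUnit S ∧ Δ.IsDiag ∧ Tmat m g = S * Δ * S⁻¹ := by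
  rintro ⟨S, Δ, hS, hΔ, hT⟩
  have hnil : IsNilpotent (Tmat m g - ((m : ℂ) + 1) • 1) := by
    rw [Tmat, add_sub_cancel_left]
    exact (Dmat_isNilpotent m).smul _
  have hscalar := Matrix.conj_eq_smul_one_of_isNilpotent_sub _ hS hΔ (hT ▸ hnil)
  rw [← hT, Tmat, add_eq_left, smul_eq_zero] at hscalar
  exact hscalar.elim (mul_ne_zero Complex.I_ne_zero (Complex.ofReal_ne_zero.mpr hg))
    (Dmat_ne_zero hm)
end

section
/- Let d ≥ 1, ω ∈ ℝ^d, and k ∈ ℤ^d with k ≠ 0, ω₁k₁ + ⋯ + ω_dk_d = 0, and such that the number of odd components of k is odd. Then there exist n, l ∈ ℕ^d with n ≠ l, Σ_i ω_i n_i = Σ_i ω_i l_i, and Σ_i n_i + Σ_i l_i odd (i.e., Σ n_i and Σ l_i have opposite parity). -/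
/-!
Split the resonance vector into its positive and negative parts, `n = k⁺` and `l = k⁻`.
Then `k = n - l`, so `⟨ω, n⟩ - ⟨ω, l⟩ = ⟨ω, k⟩ = 0`, and `n ≠ l` because `k ≠ 0`.
Moreover `n i + l i = |k i|`, which has the parity of `k i`, so `Σ n + Σ l` is congruent
mod 2 to the number of odd components of `k`.
-/

open Finset

variable {ι : Type*}

theorem toNat_ne_toNat_neg_of_ne_zero {k : ι → ℤ} (hk : k ≠ 0) :
    (fun i => (k i).toNat) ≠ fun i => (-k i).toNat := by
  intro h
  refine hk (funext fun i => ?_)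
  have hi := congrFun h i
  simpa [hi] using (Int.toNat_sub_toNat_neg (k i)).symm

theorem sum_mul_toNat_sub_sum_mul_toNat_neg [Fintype ι] {R : Type*} [Ring R]
    (ω : ι → R) (k : ι → ℤ) :
    ∑ i, ω i * ((k i).toNat : R) - ∑ i, ω i * ((-k i).toNat : R) = ∑ i, ω i * (k i : R) := by
  rw [← sum_sub_distrib]
  refine sum_congr rfl fun i _ => ?_
  rw [← mul_sub]
  congr 1
  exact_mod_cast congrArg (Int.cast : ℤ → R) (Int.toNat_sub_toNat_neg (k i))

theorem odd_sum_natAbs_iff [Fintype ι] (k : ι → ℤ) :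
    Odd (∑ i, (k i).natAbs) ↔ Odd #{i | Odd (k i)} := by
  simp only [odd_sum_iff_odd_card_odd, Int.natAbs_odd]

theorem opposite_parity_eigenfunctions_of_bad_resonance_general (d : ℕ)
    (ω : Fin d → ℝ) (k : Fin d → ℤ) (hk0 : k ≠ 0)
    (hres : ∑ i, ω i * (k i : ℝ) = 0)
    (hodd : Odd (Finset.univ.filter (fun i => Odd (k i))).card) :
    ∃ n l : Fin d → ℕ, n ≠ l ∧
      (∑ i, ω i * (n i : ℝ)) = (∑ i, ω i * (l i : ℝ)) ∧
      Odd ((∑ i, n i) + (∑ i, l i)) := by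
  refine ⟨fun i => (k i).toNat, fun i => (-k i).toNat,
    toNat_ne_toNat_neg_of_ne_zero hk0, ?_, ?_⟩
  · exact sub_eq_zero.mp ((sum_mul_toNat_sub_sum_mul_toNat_neg ω k).trans hres)
  · rw [← sum_add_distrib]
    simp only [Int.toNat_add_toNat_neg_eq_natAbs]
    exact (odd_sum_natAbs_iff k).mpr hodd

/-- if `k ∈ ℤ^d \ {0}` is a resonance vector (`Σ ω_i k_i = 0`) with an
odd number of odd components, then there exist `n, l ∈ ℕ^d`, `n ≠ l`, with
`Σ ω_i n_i = Σ ω_i l_i` and `Σ n_i + Σ l_i` odd (the two eigenfunctions `Ψ_n`, `Ψ_l`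
have opposite parity). -/
theorem opposite_parity_eigenfunctions_of_bad_resonance (d : ℕ) (hd : 1 ≤ d)
    (ω : Fin d → ℝ) (k : Fin d → ℤ) (hk0 : k ≠ 0)
    (hres : ∑ i, ω i * (k i : ℝ) = 0)
    (hodd : Odd (Finset.univ.filter (fun i => Odd (k i))).card) :
    ∃ n l : Fin d → ℕ, n ≠ l ∧
      (∑ i, ω i * (n i : ℝ)) = (∑ i, ω i * (l i : ℝ)) ∧
      Odd ((∑ i, n i) + (∑ i, l i)) :=
  opposite_parity_eigenfunctions_of_bad_resonance_general d ω k hk0 hres hodd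
end

section
/- Define linear operators on smooth functions u : ℝ² → ℂ by: (A₂*u)(x) := x₂·u(x) − (∂u/∂x₂)(x) (creation operator in x₂, up to normalization), (A₁u)(x) := x₁·u(x) + (∂u/∂x₁)(x), and the Schrödinger operator ℋ(g)u := (1/2)(−∂²u/∂x₁² + x₁²·u) + (1/2)(−∂²u/∂x₂² + x₂²·u) + (i g/2)·A₂*(A₁ u). Let G(x₁,x₂) := e^{−(x₁²+x₂²)/2} and v_m := (A₂*)^m G (the m-fold iterate of A₂* applied to G). Then for every m ∈ ℕ and every g ∈ ℝ: v_m is a nonzero smooth function and ℋ(g) v_m = (m+1)·v_m. -/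
/-- The (unnormalized) creation operator in `x₂`: `(A₂*u)(x) = x₂·u(x) − ∂u/∂x₂(x)`,
for curried functions `u : ℝ → ℝ → ℂ`. -/
noncomputable def A2star (u : ℝ → ℝ → ℂ) : ℝ → ℝ → ℂ :=
  fun x₁ x₂ => (x₂ : ℂ) * u x₁ x₂ - deriv (u x₁) x₂

/-- The (unnormalized) annihilation operator in `x₁`: `(A₁u)(x) = x₁·u(x) + ∂u/∂x₁(x)`. -/
noncomputable def A1op (u : ℝ → ℝ → ℂ) : ℝ → ℝ → ℂ :=
  fun x₁ x₂ => (x₁ : ℂ) * u x₁ x₂ + deriv (fun t => u t x₂) x₁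

/-- The PT-symmetric Schrödinger operator
`ℋ(g)u = (1/2)(−∂²u/∂x₁² + x₁²u) + (1/2)(−∂²u/∂x₂² + x₂²u) + (i g/2)·A₂*(A₁u)`. -/
noncomputable def Hop (g : ℝ) (u : ℝ → ℝ → ℂ) : ℝ → ℝ → ℂ :=
  fun x₁ x₂ =>
    (1 / 2 : ℂ) * (-(deriv (deriv (fun s => u s x₂)) x₁) + (x₁ : ℂ) ^ 2 * u x₁ x₂) +
    (1 / 2 : ℂ) * (-(deriv (deriv (u x₁)) x₂) + (x₂ : ℂ) ^ 2 * u x₁ x₂) +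
    (Complex.I * (g : ℂ) / 2) * A2star (A1op u) x₁ x₂

/-- The Gaussian `G(x₁,x₂) = e^{−(x₁²+x₂²)/2}`. -/
noncomputable def Gauss : ℝ → ℝ → ℂ :=
  fun x₁ x₂ => Complex.exp (-(((x₁ : ℂ) ^ 2 + (x₂ : ℂ) ^ 2)) / 2)

open Polynomial

/-- The (physicists') Hermite polynomials, via the recursion `H_{m+1} = 2X·H_m − H_m'`. -/
noncomputable def HP : ℕ → ℝ[X]
  | 0 => 1
  | m + 1 => C 2 * X * HP m - derivative (HP m)

lemma HP_succ (m : ℕ) : HP (m + 1) = C 2 * X * HP m - derivative (HP m) := rfl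

lemma HP_deriv : ∀ m : ℕ, derivative (HP (m + 1)) = C (2 * (m + 1) : ℝ) * HP m := by
  intro m
  induction m with
  | zero => simp [HP]
  | succ n ih =>
    have hC : (C (2 * ((n:ℝ) + 1 + 1))) = C (2 * ((n:ℝ) + 1)) + C 2 := by
      rw [← C_add]; ring_nf
    rw [HP_succ (n+1), derivative_sub, derivative_mul, derivative_mul, ih, derivative_mul,
      derivative_C, derivative_X]
    simp only [derivative_C, Nat.cast_add, Nat.cast_one]
    rw [hC, HP_succ n]
    ring

lemma HP_ode (m : ℕ) :
    C 2 * X * derivative (HP m) - derivative (derivative (HP m)) = C (2 * m : ℝ) * HP m := by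
  cases m with
  | zero => simp [HP]
  | succ n => rw [HP_deriv n, derivative_mul, derivative_C, HP_succ n]; push_cast; ring

lemma HP_natDegree_coeff : ∀ m : ℕ, (HP m).natDegree ≤ m ∧ (HP m).coeff m = 2 ^ m := by
  intro m
  induction m with
  | zero => simp [HP]
  | succ n ih =>
    obtain ⟨hd, hc⟩ := ih
    constructor
    · rw [HP_succ]
      refine (natDegree_sub_le _ _).trans (max_le ?_ ?_)
      · refine (natDegree_mul_le).trans ?_
        have h1 : (C (2:ℝ) * X).natDegree ≤ 1 := (natDegree_C_mul_le _ _).trans natDegree_X.le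
        omega
      · exact (natDegree_derivative_le _).trans (by omega)
    · rw [HP_succ, coeff_sub, coeff_derivative, mul_comm (C 2) X, mul_assoc, coeff_X_mul,
        coeff_C_mul, hc, coeff_eq_zero_of_natDegree_lt (by omega)]
      ring

lemma HP_ne_zero (m : ℕ) : HP m ≠ 0 := fun h => by
  have := (HP_natDegree_coeff m).2
  rw [h] at this
  simp at this
  exact (pow_ne_zero m (two_ne_zero)) this.symm

lemma hasDerivAt_ofReal (x : ℝ) : HasDerivAt (fun t : ℝ => (t : ℂ)) 1 x := by
  simpa using (hasDerivAt_id x).ofReal_comp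

lemma gauss_derivC (c : ℂ) (z : ℂ) :
    HasDerivAt (fun w : ℂ => Complex.exp (-((c + w ^ 2)) / 2))
      (-z * Complex.exp (-((c + z ^ 2)) / 2)) z := by
  have h : HasDerivAt (fun w : ℂ => -((c + w ^ 2)) / 2) (-z) z := by
    have := (((hasDerivAt_const z c).add (hasDerivAt_pow 2 z)).neg).div_const 2
    refine this.congr_deriv ?_
    push_cast
    ring
  simpa [mul_comm] using h.cexp

lemma gauss_deriv2 (x₁ x₂ : ℝ) :
    HasDerivAt (fun t : ℝ => Gauss x₁ t) (-(x₂ : ℂ) * Gauss x₁ x₂) x₂ :=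
  (gauss_derivC ((x₁:ℂ)^2) (x₂:ℂ)).comp_ofReal

lemma gauss_deriv1 (x₂ x₁ : ℝ) :
    HasDerivAt (fun s : ℝ => Gauss s x₂) (-(x₁ : ℂ) * Gauss x₁ x₂) x₁ := by
  have h := (gauss_derivC ((x₂:ℂ)^2) (x₁:ℂ)).comp_ofReal
  simp only [Gauss]
  convert h using 2 <;> ring_nf

lemma hasDerivAt_polyC (p : ℝ[X]) (x : ℝ) :
    HasDerivAt (fun t : ℝ => ((p.eval t : ℝ) : ℂ)) ((p.derivative.eval x : ℝ) : ℂ) x :=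
  (p.hasDerivAt x).ofReal_comp

lemma hasDerivAt_V2 (p : ℝ[X]) (x₁ x₂ : ℝ) :
    HasDerivAt (fun t : ℝ => Gauss x₁ t * ((p.eval t : ℝ) : ℂ))
      (Gauss x₁ x₂ * (((derivative p - X * p).eval x₂ : ℝ) : ℂ)) x₂ := by
  have := (gauss_deriv2 x₁ x₂).mul (hasDerivAt_polyC p x₂)
  refine this.congr_deriv ?_
  simp only [eval_sub, eval_mul, eval_X]
  push_cast
  ring

lemma hasDerivAt_V1 (c : ℂ) (x₂ x₁ : ℝ) :
    HasDerivAt (fun s : ℝ => Gauss s x₂ * c) (-(x₁ : ℂ) * (Gauss x₁ x₂ * c)) x₁ := by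
  simpa [mul_assoc] using (gauss_deriv1 x₂ x₁).mul_const c

lemma iter_eq : ∀ m : ℕ,
    A2star^[m] Gauss = fun x₁ x₂ => Gauss x₁ x₂ * (((HP m).eval x₂ : ℝ) : ℂ) := by
  intro m
  induction m with
  | zero => funext x₁ x₂; simp [HP]
  | succ n ih =>
    rw [Function.iterate_succ_apply', ih]
    funext x₁ x₂
    have hd : deriv (fun t : ℝ => Gauss x₁ t * (((HP n).eval t : ℝ) : ℂ)) x₂
        = Gauss x₁ x₂ * (((derivative (HP n) - X * HP n).eval x₂ : ℝ) : ℂ) :=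
      (hasDerivAt_V2 (HP n) x₁ x₂).deriv
    simp only [A2star, hd, HP_succ]
    simp only [eval_sub, eval_mul, eval_X, eval_C]
    push_cast
    ring

lemma poly_contDiff (p : ℝ[X]) : ContDiff ℝ (⊤ : ℕ∞) fun x : ℝ => p.eval x := by
  induction p using Polynomial.induction_on' with
  | add p q hp hq => simpa [Polynomial.eval_add] using hp.add hq
  | monomial n a =>
    simpa [Polynomial.eval_monomial] using (contDiff_const (c := a)).mul (contDiff_id.pow n)

lemma smooth_vm (m : ℕ) :
    ContDiff ℝ (⊤ : ℕ∞) (fun q : ℝ × ℝ => Gauss q.1 q.2 * (((HP m).eval q.2 : ℝ) : ℂ)) := by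
  have h1 : ContDiff ℝ (⊤ : ℕ∞) (fun q : ℝ × ℝ => Gauss q.1 q.2) := by
    have hin : ContDiff ℝ (⊤ : ℕ∞) (fun q : ℝ × ℝ => -(((q.1 : ℂ) ^ 2 + (q.2 : ℂ) ^ 2)) / 2) := by
      apply ContDiff.div_const
      apply ContDiff.neg
      exact ((Complex.ofRealCLM.contDiff.comp contDiff_fst).pow 2).add
        ((Complex.ofRealCLM.contDiff.comp contDiff_snd).pow 2)
    exact Complex.contDiff_exp.comp hin
  have h2 : ContDiff ℝ (⊤ : ℕ∞) (fun q : ℝ × ℝ => (((HP m).eval q.2 : ℝ) : ℂ)) :=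
    (Complex.ofRealCLM.contDiff.comp (poly_contDiff (HP m))).comp contDiff_snd
  exact h1.mul h2

/-- The key polynomial identity: with `q = p' − Xp`,
`−(q' − Xq) + X²p = (2m+1)p` for `p = HP m`, by the Hermite ODE. -/
lemma HP_key (m : ℕ) :
    -(derivative (derivative (HP m) - X * HP m) - X * (derivative (HP m) - X * HP m))
      + X ^ 2 * HP m = C (2 * m + 1 : ℝ) * HP m := by
  have hC : (C (2 * (m:ℝ) + 1)) = C (2 * (m:ℝ)) + 1 := by
    rw [← C_1, ← C_add]
  have h2 : (C (2:ℝ)) = 2 := map_ofNat C 2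
  have ode := HP_ode m
  rw [h2] at ode
  rw [derivative_sub, derivative_mul, derivative_X, one_mul, hC]
  linear_combination ode

lemma A1op_vm (m : ℕ) :
    A1op (fun x₁ x₂ => Gauss x₁ x₂ * (((HP m).eval x₂ : ℝ) : ℂ)) = fun _ _ => 0 := by
  funext x₁ x₂
  simp only [A1op]
  rw [(hasDerivAt_V1 (((HP m).eval x₂ : ℝ) : ℂ) x₂ x₁).deriv]
  ring

/-- for every `m ∈ ℕ` and `g ∈ ℝ`, the function `v_m = (A₂*)^m G` is a
nonzero smooth function and is an eigenfunction of `ℋ(g)` with eigenvalue `m+1`: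
`ℋ(g) v_m = (m+1)·v_m`. -/
theorem Hop_eigenfunction (m : ℕ) (g : ℝ) :
    (A2star^[m] Gauss ≠ fun _ _ => 0) ∧
    ContDiff ℝ (⊤ : ℕ∞) (fun p : ℝ × ℝ => A2star^[m] Gauss p.1 p.2) ∧
    (∀ x₁ x₂ : ℝ, Hop g (A2star^[m] Gauss) x₁ x₂ = ((m : ℂ) + 1) * A2star^[m] Gauss x₁ x₂) := by
  rw [iter_eq m]
  refine ⟨?_, smooth_vm m, ?_⟩
  · intro hEq
    apply HP_ne_zero m
    apply Polynomial.zero_of_eval_zero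
    intro x
    have hx := congrFun (congrFun hEq 0) x
    have hG : Gauss 0 x ≠ 0 := Complex.exp_ne_zero _
    have : (((HP m).eval x : ℝ) : ℂ) = 0 := (mul_eq_zero.mp hx).resolve_left hG
    exact_mod_cast this
  · intro x₁ x₂
    set p : ℝ[X] := HP m with hp
    set q : ℝ[X] := derivative p - X * p with hq
    set c : ℂ := ((p.eval x₂ : ℝ) : ℂ) with hc
    -- first-variable derivatives
    have e1 : deriv (fun s : ℝ => Gauss s x₂ * c) = fun s : ℝ => -(s : ℂ) * (Gauss s x₂ * c) :=
      funext fun s => (hasDerivAt_V1 c x₂ s).deriv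
    have e2 : HasDerivAt (fun s : ℝ => -(s : ℂ) * (Gauss s x₂ * c))
        ((-1) * (Gauss x₁ x₂ * c) + (-(x₁ : ℂ)) * (-(x₁ : ℂ) * (Gauss x₁ x₂ * c))) x₁ :=
      ((hasDerivAt_ofReal x₁).neg).mul (hasDerivAt_V1 c x₂ x₁)
    -- second-variable derivatives
    have f1 : deriv (fun t : ℝ => Gauss x₁ t * ((p.eval t : ℝ) : ℂ))
        = fun t : ℝ => Gauss x₁ t * ((q.eval t : ℝ) : ℂ) :=
      funext fun t => (hasDerivAt_V2 p x₁ t).deriv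
    have f2 : deriv (fun t : ℝ => Gauss x₁ t * ((q.eval t : ℝ) : ℂ)) x₂
        = Gauss x₁ x₂ * (((derivative q - X * q).eval x₂ : ℝ) : ℂ) :=
      (hasDerivAt_V2 q x₁ x₂).deriv
    -- evaluated key identity
    have key : -((((derivative q - X * q).eval x₂ : ℝ)) : ℂ) + (x₂ : ℂ) ^ 2 * c
        = (2 * (m : ℂ) + 1) * c := by
      have hkey := HP_key m
      have := congrArg (fun r : ℝ[X] => r.eval x₂) hkey
      simp only [eval_add, eval_neg, eval_mul, eval_pow, eval_X, eval_C, ← hq, ← hp] at this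
      have thisC := congrArg (fun r : ℝ => (r : ℂ)) this
      push_cast at thisC
      rw [hc]
      linear_combination thisC
    have hA : A1op (fun x₁ x₂ => Gauss x₁ x₂ * ((p.eval x₂ : ℝ) : ℂ)) = fun _ _ => 0 := A1op_vm m
    simp only [Hop, hA, ← hc, e1, f1, f2, e2.deriv]
    have hzero : A2star (fun _ _ => (0 : ℂ)) x₁ x₂ = 0 := by
      simp [A2star]
    rw [hzero]
    linear_combination (1 / 2 : ℂ) * Gauss x₁ x₂ * key
end
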